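/- Let w ∈ S_n have full support, and suppose s and t are both commuting descents of w. Then s and t commute with each other. -/

import Mathlib

/-- The support of `w`: the set of simple reflection indices appearing in some
(equivalently, any) reduced word for `w`. -/
def CoxeterSystem.supp {B W : Type*} [Group W] {M : CoxeterMatrix B}
    (cs : CoxeterSystem M W) (w : W) : Set B :=
  { i | ∃ ω : List B, cs.IsReduced ω ∧ cs.wordProd ω = w ∧ i ∈ ω }

/-!
In `S_{m+1}` the Coxeter length of `w` is its number of inversions, because right multiplication
by an adjacent transposition `s_i` changes the inversion count by exactly one and every `w ≠ 1`
has an adjacent inversion. Hence `s_i` is a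
right descent of `w` iff `w (i + 1) < w i`. A left descent `s_i` commuting with `w` is also a right
descent, and `w` conjugates `s_i` to itself, so `w` preserves `{i, i + 1}` and, being a descent,
swaps it. Two pairs swapped by the same permutation are equal or disjoint, so the corresponding
transpositions commute.
-/

open Equiv Finset

theorem CovBy.swap_apply_lt_swap_apply {α : Type*} [LinearOrder α] {a b x y : α}
    (hab : a ⋖ b) (hxy : x < y) (hne : (x, y) ≠ (a, b)) :
    swap a b x < swap a b y := by
  have hlt := hab.lt
  have h₁ : a < y → b ≤ y := hab.ge_of_gt
  have h₂ : x < b → x ≤ a := hab.le_of_lt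
  simp only [swap_apply_def, ne_eq, Prod.mk.injEq] at *
  split_ifs <;> grind

theorem Fin.castSucc_covBy_succ {n : ℕ} (i : Fin n) : i.castSucc ⋖ i.succ := by
  refine ⟨i.castSucc_lt_succ, fun c h₁ h₂ => ?_⟩
  rw [Fin.lt_def, Fin.val_castSucc] at h₁
  rw [Fin.lt_def, Fin.val_succ] at h₂
  omega

namespace Equiv.Perm

theorem commute_swap_swap_of_apply_eq {α : Type*} [DecidableEq α] {w : Perm α}
    {a b c d : α} (ha : w a = b) (hb : w b = a) (hc : w c = d) (hd : w d = c) :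
    Commute (swap a b) (swap c d) := by
  by_cases hac : a = c
  · subst hac
    rw [← ha, hc]
  by_cases had : a = d
  · subst had
    rw [← ha, hd, swap_comm]
  have hbc : b ≠ c := fun h => had (by rw [← hb, h, hc])
  have hbd : b ≠ d := fun h => hac (by rw [← hb, h, hd])
  refine Disjoint.commute fun x => ?_
  by_cases hx : x = c ∨ x = d
  · left
    rcases hx with rfl | rfl
    · exact swap_apply_of_ne_of_ne (Ne.symm hac) (Ne.symm hbc)
    · exact swap_apply_of_ne_of_ne (Ne.symm had) (Ne.symm hbd)
  · exact .inr (swap_apply_of_ne_of_ne (not_or.1 hx).1 (not_or.1 hx).2)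

theorem exists_apply_succ_lt_apply_castSucc {n : ℕ} {w : Perm (Fin (n + 1))}
    (hw : w ≠ 1) : ∃ i : Fin n, w i.succ < w i.castSucc := by
  by_contra! h
  have hmono : StrictMono w := Fin.strictMono_iff_lt_succ.2 fun i =>
    (h i).lt_of_ne (w.injective.ne i.castSucc_lt_succ.ne)
  apply hw
  exact Equiv.ext fun x => DFunLike.congr_fun
    (Subsingleton.elim (hmono.orderIsoOfSurjective w w.surjective) (OrderIso.refl _)) x

variable {α : Type*} [LinearOrder α] {a b : α}

theorem apply_eq_of_commute_swap {w : Perm α} (hab : a < b) (hc : Commute (swap a b) w)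
    (hd : w b < w a) : w a = b ∧ w b = a := by
  have key : swap a b (w b) = w a := by simpa using DFunLike.congr_fun hc.eq b
  by_cases hwb : w b = a
  · rw [← key, hwb, swap_apply_left]
    exact ⟨rfl, rfl⟩
  by_cases hwb' : w b = b
  · rw [hwb', swap_apply_right] at key
    rw [hwb', ← key] at hd
    exact absurd hd hab.not_gt
  rw [swap_apply_of_ne_of_ne hwb hwb'] at key
  exact absurd (w.injective key) hab.ne'

variable [Fintype α]

def inversions (w : Perm α) : Finset (α × α) := {p | p.1 < p.2 ∧ w p.2 < w p.1}

@[simp]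
theorem mem_inversions {w : Perm α} {p : α × α} :
    p ∈ w.inversions ↔ p.1 < p.2 ∧ w p.2 < w p.1 := by
  simp [inversions]

@[simp]
theorem inversions_one : (1 : Perm α).inversions = ∅ := by
  ext p
  simp only [mem_inversions, one_apply, notMem_empty, iff_false, not_and, not_lt]
  exact le_of_lt

theorem mapsTo_erase_inversions_mul_swap (hab : a ⋖ b) (w : Perm α) :
    Set.MapsTo (Prod.map (swap a b) (swap a b))
      ((w * swap a b).inversions.erase (a, b)) (w.inversions.erase (a, b)) := by
  rintro ⟨x, y⟩ hp
  simp only [coe_erase, Set.mem_sdiff, mem_coe, mem_inversions, mul_apply,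
    Set.mem_singleton_iff] at hp ⊢
  obtain ⟨⟨hxy, hw⟩, hne⟩ := hp
  refine ⟨⟨hab.swap_apply_lt_swap_apply hxy hne, hw⟩, fun h => ?_⟩
  simp only [Prod.map, Prod.mk.injEq, swap_apply_eq_iff, swap_apply_left,
    swap_apply_right] at h
  obtain ⟨rfl, rfl⟩ := h
  exact hab.lt.not_gt hxy

theorem card_erase_inversions_mul_swap (hab : a ⋖ b) (w : Perm α) :
    #((w * swap a b).inversions.erase (a, b)) = #(w.inversions.erase (a, b)) := by
  have hinv : Function.Involutive (Prod.map (swap a b) (swap a b)) := fun p =>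
    Prod.ext (swap_apply_self _ _ _) (swap_apply_self _ _ _)
  refine card_nbij' _ _ (mapsTo_erase_inversions_mul_swap hab w) ?_
    (fun p _ => hinv p) (fun p _ => hinv p)
  simpa [mul_assoc] using mapsTo_erase_inversions_mul_swap hab (w * swap a b)

theorem card_inversions_mul_swap_of_lt (hab : a ⋖ b) {w : Perm α} (h : w a < w b) :
    #(w * swap a b).inversions = #w.inversions + 1 := by
  have hmem : (a, b) ∈ (w * swap a b).inversions := by simpa using ⟨hab.lt, h⟩
  have hnotMem : (a, b) ∉ w.inversions := by simpa using fun _ => h.le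
  rw [← card_erase_add_one hmem, card_erase_inversions_mul_swap hab,
    erase_eq_of_notMem hnotMem]

theorem card_inversions_mul_swap_of_gt (hab : a ⋖ b) {w : Perm α} (h : w b < w a) :
    #(w * swap a b).inversions + 1 = #w.inversions := by
  have h' : (w * swap a b) a < (w * swap a b) b := by simpa using h
  simpa [mul_assoc] using (card_inversions_mul_swap_of_lt hab h').symm

theorem card_inversions_mul_swap_le (hab : a ⋖ b) (w : Perm α) :
    #(w * swap a b).inversions ≤ #w.inversions + 1 := by
  rcases lt_or_gt_of_ne (w.injective.ne hab.lt.ne) with h | h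
  · exact (card_inversions_mul_swap_of_lt hab h).le
  · have := card_inversions_mul_swap_of_gt hab h
    omega

end Equiv.Perm

namespace CoxeterSystem

open Equiv.Perm

variable {m : ℕ} {M : CoxeterMatrix (Fin m)} (cs : CoxeterSystem M (Perm (Fin (m + 1))))
  (hs : ∀ i : Fin m, cs.simple i = swap i.castSucc i.succ)
include hs

theorem card_inversions_wordProd_le (ω : List (Fin m)) :
    #(cs.wordProd ω).inversions ≤ ω.length := by
  induction ω using List.reverseRecOn with
  | nil => simp
  | append_singleton ω i ih =>
    rw [wordProd_append, wordProd_singleton, hs, List.length_append, List.length_singleton]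
    exact (card_inversions_mul_swap_le i.castSucc_covBy_succ _).trans (by omega)

theorem length_le_card_inversions (w : Perm (Fin (m + 1))) : cs.length w ≤ #w.inversions := by
  induction h : #w.inversions using Nat.strong_induction_on generalizing w with
  | _ k ih =>
    rcases eq_or_ne w 1 with rfl | hw
    · simp
    obtain ⟨i, hi⟩ := exists_apply_succ_lt_apply_castSucc hw
    have hcard := card_inversions_mul_swap_of_gt i.castSucc_covBy_succ hi
    have hlen : cs.length (w * cs.simple i) ≤ #(w * cs.simple i).inversions :=
      ih _ (by rw [hs]; omega) _ rfl
    calc cs.length w = cs.length (w * cs.simple i * cs.simple i) := by simp [mul_assoc]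
      _ ≤ cs.length (w * cs.simple i) + 1 := by
        simpa using cs.length_mul_le (w * cs.simple i) (cs.simple i)
      _ ≤ k := by rw [hs] at hlen ⊢; omega

theorem length_eq_card_inversions (w : Perm (Fin (m + 1))) : cs.length w = #w.inversions := by
  obtain ⟨ω, hω, rfl⟩ := cs.exists_isReduced w
  exact (length_le_card_inversions cs hs _).antisymm
    (hω.eq ▸ card_inversions_wordProd_le cs hs ω)

theorem isRightDescent_iff_apply_succ_lt {w : Perm (Fin (m + 1))} {i : Fin m} :
    cs.IsRightDescent w i ↔ w i.succ < w i.castSucc := by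
  rw [IsRightDescent, length_eq_card_inversions cs hs, length_eq_card_inversions cs hs, hs]
  rcases lt_or_gt_of_ne (w.injective.ne i.castSucc_lt_succ.ne) with h | h
  · simp only [card_inversions_mul_swap_of_lt i.castSucc_covBy_succ h]
    simp [h.not_gt]
  · have := card_inversions_mul_swap_of_gt i.castSucc_covBy_succ h
    simp only [h, iff_true]
    omega

theorem apply_eq_of_isLeftDescent_of_commute {w : Perm (Fin (m + 1))} {i : Fin m}
    (hi : cs.IsLeftDescent w i) (hic : cs.simple i * w = w * cs.simple i) :
    w i.castSucc = i.succ ∧ w i.succ = i.castSucc := by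
  have hd : cs.IsRightDescent w i := by rw [IsRightDescent, ← hic]; exact hi
  rw [hs] at hic
  exact apply_eq_of_commute_swap i.castSucc_lt_succ hic
    ((isRightDescent_iff_apply_succ_lt cs hs).1 hd)

end CoxeterSystem

theorem stmt_6_general {m : ℕ}
    (cs : CoxeterSystem (CoxeterMatrix.Aₙ m) (Equiv.Perm (Fin (m + 1))))
    (hs : ∀ i : Fin m, cs.simple i = Equiv.swap i.castSucc i.succ)
    (w : Equiv.Perm (Fin (m + 1)))
    (i j : Fin m)
    (hi : cs.IsLeftDescent w i) (hic : cs.simple i * w = w * cs.simple i)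
    (hj : cs.IsLeftDescent w j) (hjc : cs.simple j * w = w * cs.simple j) :
    Commute (cs.simple i) (cs.simple j) := by
  obtain ⟨hia, hib⟩ := cs.apply_eq_of_isLeftDescent_of_commute hs hi hic
  obtain ⟨hja, hjb⟩ := cs.apply_eq_of_isLeftDescent_of_commute hs hj hjc
  rw [hs, hs]
  exact Equiv.Perm.commute_swap_swap_of_apply_eq hia hib hja hjb

/-- If `w ∈ S_n` has full support and `s, t` are both commuting descents of `w`
(descents commuting with `w`), then `s` and `t` commute with each other. -/
theorem stmt_6 {m : ℕ}
    (cs : CoxeterSystem (CoxeterMatrix.Aₙ m) (Equiv.Perm (Fin (m + 1))))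
    (hs : ∀ i : Fin m, cs.simple i = Equiv.swap i.castSucc i.succ)
    (w : Equiv.Perm (Fin (m + 1)))
    (hfull : cs.supp w = Set.univ)
    (i j : Fin m)
    (hi : cs.IsLeftDescent w i) (hic : cs.simple i * w = w * cs.simple i)
    (hj : cs.IsLeftDescent w j) (hjc : cs.simple j * w = w * cs.simple j) :
    Commute (cs.simple i) (cs.simple j) :=
  stmt_6_general cs hs w i j hi hic hj hjc
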